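/- arXiv:0809.3367 — 2 statements merged into one kernel-verified Lean document; each statement's English description precedes it below -/
import Mathlib

section
/- Let V, W ∈ ℝ[X], ħ a nonzero real number, I ⊆ ℝ an interval, and s : I → ℝ^m a differentiable map whose coordinates are pairwise distinct for every t ∈ I and satisfy, for all t ∈ I and all i, the deformed Bethe equations V′(s_i(t)) + t·W′(s_i(t)) = 2ħ ∑_{j≠i} 1/(s_i(t) − s_j(t)). Define F⁰(t) = ħ² ∑_{i≠j} ln|s_i(t) − s_j(t)| − ħ ∑_{i=1}^m (V + tW)(s_i(t)). Then F⁰ is differentiable on I and dF⁰/dt (t) = −ħ ∑_{i=1}^m W(s_i(t)) for every t ∈ I. -/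
/-!
Differentiating `F⁰` along the family, the logarithmic term contributes
`ħ² ∑_{i≠j} (s'ᵢ - s'ⱼ)/(sᵢ - sⱼ)`, which by symmetrizing over ordered pairs equals
`ħ² ∑ᵢ s'ᵢ · 2 ∑_{j≠i} 1/(sᵢ - sⱼ)`. The Bethe equations turn this into
`ħ ∑ᵢ s'ᵢ (V' + tW')(sᵢ)`, which cancels exactly the chain-rule part of the derivative of
`ħ ∑ᵢ (V + tW)(sᵢ)`, leaving only its explicit `t`-derivative `ħ ∑ᵢ W(sᵢ)`.
-/

open Finset Polynomial

section Symmetrization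

variable {ι : Type*} [Fintype ι] [DecidableEq ι]

theorem Finset.sum_sum_erase_comm {M : Type*} [AddCommMonoid M] (g : ι → ι → M) :
    ∑ i, ∑ j ∈ univ.erase i, g i j = ∑ i, ∑ j ∈ univ.erase i, g j i := by
  simp only [← filter_ne', sum_filter]
  rw [sum_comm]
  exact sum_congr rfl fun i _ => sum_congr rfl fun j _ => by simp only [ne_comm]

theorem Finset.sum_sum_erase_div_sub {𝕜 : Type*} [Field 𝕜] (x v : ι → 𝕜) :
    ∑ i, ∑ j ∈ univ.erase i, (v i - v j) / (x i - x j)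
      = 2 * ∑ i, v i * ∑ j ∈ univ.erase i, 1 / (x i - x j) := by
  have hsplit : ∀ i j, (v i - v j) / (x i - x j)
      = v i * (1 / (x i - x j)) + v j * (1 / (x j - x i)) := by
    intro i j
    rw [← neg_sub (x i), div_neg, sub_div]
    ring
  simp only [hsplit, sum_add_distrib]
  rw [← sum_sum_erase_comm (fun i j => v i * (1 / (x i - x j))), ← two_mul]
  exact congrArg _ (sum_congr rfl fun i _ => (mul_sum _ _ _).symm)

end Symmetrization

section Derivatives

variable {ι : Type*} [Fintype ι] {s s' : ℝ → ι → ℝ} {I : Set ℝ} {t : ℝ}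

theorem hasDerivWithinAt_sum_sum_erase_log_abs_sub [DecidableEq ι]
    (hdiff : ∀ i, HasDerivWithinAt (fun τ => s τ i) (s' t i) I t)
    (hdist : ∀ i j, i ≠ j → s t i ≠ s t j) :
    HasDerivWithinAt (fun τ => ∑ i, ∑ j ∈ univ.erase i, Real.log |s τ i - s τ j|)
      (2 * ∑ i, s' t i * ∑ j ∈ univ.erase i, 1 / (s t i - s t j)) I t := by
  rw [← sum_sum_erase_div_sub]
  simp only [Real.log_abs]
  refine .fun_sum fun i _ => .fun_sum fun j hj => ?_
  exact ((hdiff i).sub (hdiff j)).log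
    (sub_ne_zero.mpr (hdist i j (mem_erase.mp hj).1.symm))

theorem hasDerivWithinAt_sum_eval_add_mul_eval (P Q : ℝ[X])
    (hdiff : ∀ i, HasDerivWithinAt (fun τ => s τ i) (s' t i) I t) :
    HasDerivWithinAt (fun τ => ∑ i, (P.eval (s τ i) + τ * Q.eval (s τ i)))
      (∑ i, ((P.derivative.eval (s t i) + t * Q.derivative.eval (s t i)) * s' t i
        + Q.eval (s t i))) I t := by
  refine .fun_sum fun i _ => ?_
  have hP := (P.hasDerivAt (s t i)).comp_hasDerivWithinAt t (hdiff i)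
  have hQ := (Q.hasDerivAt (s t i)).comp_hasDerivWithinAt t (hdiff i)
  refine (hP.add ((hasDerivWithinAt_id t I).mul hQ)).congr_deriv ?_
  simp only [Function.comp_apply, id_eq]
  ring

end Derivatives

theorem planar_free_energy_variation_general (m : ℕ) (hbar : ℝ)
    (V W : Polynomial ℝ) (I : Set ℝ)
    (s s' : ℝ → Fin m → ℝ)
    (hdiff : ∀ t ∈ I, ∀ i, HasDerivWithinAt (fun τ => s τ i) (s' t i) I t)
    (hdist : ∀ t ∈ I, ∀ i j, i ≠ j → s t i ≠ s t j)
    (hBethe : ∀ t ∈ I, ∀ i,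
      V.derivative.eval (s t i) + t * W.derivative.eval (s t i)
        = 2 * hbar * ∑ j ∈ univ.erase i, 1 / (s t i - s t j)) :
    ∀ t ∈ I,
      HasDerivWithinAt
        (fun τ => hbar ^ 2 * ∑ i, ∑ j ∈ univ.erase i, Real.log |s τ i - s τ j|
          - hbar * ∑ i, (V.eval (s τ i) + τ * W.eval (s τ i)))
        (-hbar * ∑ i, W.eval (s t i)) I t := by
  intro t ht
  have hlog := hasDerivWithinAt_sum_sum_erase_log_abs_sub (hdiff t ht) (hdist t ht)
  have hpot := hasDerivWithinAt_sum_eval_add_mul_eval V W (hdiff t ht)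
  refine ((hlog.const_mul (hbar ^ 2)).sub (hpot.const_mul hbar)).congr_deriv ?_
  have hchain : ∑ i, (2 * hbar * ∑ j ∈ univ.erase i, 1 / (s t i - s t j)) * s' t i
      = 2 * hbar * ∑ i, s' t i * ∑ j ∈ univ.erase i, 1 / (s t i - s t j) := by
    rw [mul_sum]
    exact sum_congr rfl fun _ _ => by ring
  simp only [hBethe t ht, sum_add_distrib, hchain]
  ring

/-- Along a differentiable family of Bethe roots of the deformed
potential `V + t W`, the planar free energy
`F⁰(t) = ħ² ∑_{i≠j} ln|s i (t) − s j (t)| − ħ ∑ i, (V + tW)(s i (t))`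
is differentiable with `dF⁰/dt = −ħ ∑ i, W(s i (t))`. -/
theorem planar_free_energy_variation (m : ℕ) (hbar : ℝ) (hhbar : hbar ≠ 0)
    (V W : Polynomial ℝ) (I : Set ℝ) (hI : I.OrdConnected) (hInontriv : I.Nontrivial)
    (s s' : ℝ → Fin m → ℝ)
    (hdiff : ∀ t ∈ I, ∀ i, HasDerivWithinAt (fun τ => s τ i) (s' t i) I t)
    (hdist : ∀ t ∈ I, ∀ i j, i ≠ j → s t i ≠ s t j)
    (hBethe : ∀ t ∈ I, ∀ i,
      V.derivative.eval (s t i) + t * W.derivative.eval (s t i)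
        = 2 * hbar * ∑ j ∈ univ.erase i, 1 / (s t i - s t j)) :
    ∀ t ∈ I,
      HasDerivWithinAt
        (fun τ => hbar ^ 2 * ∑ i, ∑ j ∈ univ.erase i, Real.log |s τ i - s τ j|
          - hbar * ∑ i, (V.eval (s τ i) + τ * W.eval (s τ i)))
        (-hbar * ∑ i, W.eval (s t i)) I t :=
  planar_free_energy_variation_general m hbar V W I s s' hdiff hdist hBethe
end

section
/- Let V ∈ ℂ[X], let I ⊆ ℝ \ {0} be an interval, and let s : I → ℂ^m be a differentiable map whose coordinates are pairwise distinct for every ħ ∈ I and satisfy, for all ħ ∈ I and all i, the Bethe equations V′(s_i(ħ)) = 2ħ ∑_{j≠i} 1/(s_i(ħ) − s_j(ħ)). Assume moreover that for each ħ the Hessian matrix T(ħ) (with T_{ii}(ħ) = (1/ħ)V″(s_i(ħ)) + 2∑_{j≠i}1/(s_i(ħ)−s_j(ħ))² and T_{ij}(ħ) = −2/(s_i(ħ)−s_j(ħ))² for i ≠ j) is invertible with inverse A(ħ). Then for every ħ ∈ I and every x ∈ ℂ not equal to any s_i(ħ), setting ω_ħ(x) = ħ ∑_{i=1}^m 1/(x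 − s_i(ħ)): ħ · ∂/∂ħ [ ω_ħ(x) ] = ω_ħ(x) + ∑_{i,j=1}^m A_{ij}(ħ) · V′(s_j(ħ)) / (x − s_i(ħ))². -/
open Finset Polynomial

/-- The Hessian matrix `T` of the paper: `T i i = (1/ħ) vpp i + 2 ∑_{k≠i} 1/(σ i − σ k)²`,
`T i j = −2/(σ i − σ j)²` for `i ≠ j`; here `vpp i` is the second derivative of the
potential evaluated at `σ i`. -/
noncomputable def hessianT (m : ℕ) (hbar : ℂ) (vpp : Fin m → ℂ) (σ : Fin m → ℂ) :
    Matrix (Fin m) (Fin m) ℂ :=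
  Matrix.of fun i j =>
    if i = j then (1 / hbar) * vpp i + 2 * ∑ k ∈ univ.erase i, 1 / (σ i - σ k) ^ 2
    else -2 / (σ i - σ j) ^ 2

open Matrix

/-!
Differentiating the Bethe equations `V′(sᵢ) = 2ħ ∑_{j≠i} 1/(sᵢ − sⱼ)` in `ħ` and using them
once more to eliminate `∑_{j≠i} 1/(sᵢ − sⱼ)` gives the linear system `T(ħ) (ħ² ṡ) = V′(s)`,
so `ħ² ṡ = A(ħ) V′(s)`. Since `ħ ∂_ħ ω_ħ(x) = ω_ħ(x) + ħ² ∑ᵢ ṡᵢ / (x − sᵢ)²`, substituting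
`ħ² ṡ` gives the formula.
-/

theorem Set.OrdConnected.uniqueDiffOn {I : Set ℝ} (hI : I.OrdConnected) (hnt : I.Nontrivial) :
    UniqueDiffOn ℝ I := by
  intro h hh
  obtain ⟨a, ha, hah⟩ := hnt.exists_ne h
  exact (uniqueDiffOn_uIcc hah.symm h left_mem_uIcc).mono (hI.uIcc_subset hh ha)

theorem hessianT_mulVec_apply (m : ℕ) (hbar : ℂ) (vpp σ v : Fin m → ℂ) (i : Fin m) :
    (hessianT m hbar vpp σ *ᵥ v) i
      = 1 / hbar * vpp i * v i + 2 * ∑ k ∈ univ.erase i, (v i - v k) / (σ i - σ k) ^ 2 := by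
  have hoff : ∑ k ∈ univ.erase i, hessianT m hbar vpp σ i k * v k
      = ∑ k ∈ univ.erase i, -2 / (σ i - σ k) ^ 2 * v k :=
    sum_congr rfl fun k hk => by simp [hessianT, (ne_of_mem_erase hk).symm]
  have hsplit : 2 * ∑ k ∈ univ.erase i, (v i - v k) / (σ i - σ k) ^ 2
      = 2 * (∑ k ∈ univ.erase i, 1 / (σ i - σ k) ^ 2) * v i
        + ∑ k ∈ univ.erase i, -2 / (σ i - σ k) ^ 2 * v k := by
    rw [mul_sum, mul_sum, sum_mul, ← sum_add_distrib]
    exact sum_congr rfl fun k _ => by ring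
  rw [mulVec, dotProduct, ← add_sum_erase univ _ (mem_univ i), hoff, hsplit]
  simp only [hessianT, of_apply, ↓reduceIte]
  ring

theorem hessianT_mulVec_sq_mul_eq_of_bethe {m : ℕ} {hbar : ℂ} (hbar0 : hbar ≠ 0)
    {vp vpp σ σ' : Fin m → ℂ}
    (hBethe : ∀ i, vp i = 2 * hbar * ∑ j ∈ univ.erase i, 1 / (σ i - σ j))
    (hlin : ∀ i, vpp i * σ' i = 2 * ∑ j ∈ univ.erase i, 1 / (σ i - σ j)
      + 2 * hbar * ∑ j ∈ univ.erase i, (σ' j - σ' i) / (σ i - σ j) ^ 2) :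
    hessianT m hbar vpp σ *ᵥ (fun k => hbar ^ 2 * σ' k) = vp := by
  funext i
  have hsum : ∑ k ∈ univ.erase i, (hbar ^ 2 * σ' i - hbar ^ 2 * σ' k) / (σ i - σ k) ^ 2
      = -hbar ^ 2 * ∑ k ∈ univ.erase i, (σ' k - σ' i) / (σ i - σ k) ^ 2 := by
    rw [mul_sum]
    exact sum_congr rfl fun k _ => by ring
  have hdiag : 1 / hbar * vpp i * (hbar ^ 2 * σ' i) = hbar * (vpp i * σ' i) := by
    field_simp
  rw [hessianT_mulVec_apply, hsum, hdiag, hBethe]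
  linear_combination hbar * hlin i

section Deriv

variable {m : ℕ} {I : Set ℝ} {h : ℝ} {s : ℝ → Fin m → ℂ} {s' : Fin m → ℂ}

theorem hasDerivWithinAt_ofReal_mul_sum_one_div_sub (x : ℂ)
    (hs : ∀ i, HasDerivWithinAt (fun τ => s τ i) (s' i) I h) (hx : ∀ i, x ≠ s h i) :
    HasDerivWithinAt (fun τ : ℝ => (τ : ℂ) * ∑ i, 1 / (x - s τ i))
      (∑ i, 1 / (x - s h i) + h * ∑ i, s' i / (x - s h i) ^ 2) I h := by
  have hterm : ∀ i ∈ univ, HasDerivWithinAt (fun τ : ℝ => 1 / (x - s τ i))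
      (s' i / (x - s h i) ^ 2) I h := fun i _ => by
    simpa [one_div, neg_div] using ((hs i).const_sub x).fun_inv (sub_ne_zero.mpr (hx i))
  simpa using (hasDerivWithinAt_id h I).ofReal_comp.fun_mul (HasDerivWithinAt.fun_sum hterm)

theorem hasDerivWithinAt_sum_one_div_sub (i : Fin m)
    (hs : ∀ i, HasDerivWithinAt (fun τ => s τ i) (s' i) I h)
    (hdist : ∀ j, j ≠ i → s h i ≠ s h j) :
    HasDerivWithinAt (fun τ : ℝ => ∑ j ∈ univ.erase i, 1 / (s τ i - s τ j))
      (∑ j ∈ univ.erase i, (s' j - s' i) / (s h i - s h j) ^ 2) I h := by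
  refine HasDerivWithinAt.fun_sum fun j hj => ?_
  have hne : s h i - s h j ≠ 0 := sub_ne_zero.mpr (hdist j (ne_of_mem_erase hj))
  simpa [one_div, neg_div, neg_sub] using ((hs i).fun_sub (hs j)).fun_inv hne

theorem bethe_linearization (V : ℂ[X]) (hud : UniqueDiffWithinAt ℝ I h) (hh : h ∈ I) (i : Fin m)
    (hs : ∀ i, HasDerivWithinAt (fun τ => s τ i) (s' i) I h)
    (hdist : ∀ j, j ≠ i → s h i ≠ s h j)
    (hBethe : ∀ τ ∈ I, V.derivative.eval (s τ i)
      = 2 * (τ : ℂ) * ∑ j ∈ univ.erase i, 1 / (s τ i - s τ j)) :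
    V.derivative.derivative.eval (s h i) * s' i
      = 2 * ∑ j ∈ univ.erase i, 1 / (s h i - s h j)
        + 2 * h * ∑ j ∈ univ.erase i, (s' j - s' i) / (s h i - s h j) ^ 2 := by
  have hlhs := (V.derivative.hasDerivAt (s h i)).comp_hasDerivWithinAt h (hs i)
  have hrhs := ((hasDerivWithinAt_id h I).ofReal_comp.const_mul (2 : ℂ)).fun_mul
    (hasDerivWithinAt_sum_one_div_sub i hs hdist)
  have := hud.eq_deriv _ (hlhs.congr_of_mem (fun τ hτ => (hBethe τ hτ).symm) hh) hrhs
  simpa using this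

end Deriv

/-- Along a differentiable family of Bethe roots parametrized by
`ħ ∈ I ⊆ ℝ \ {0}` whose Hessian `T(ħ)` is invertible with inverse `A(ħ)`, the
resolvent `ω_ħ(x) = ħ ∑ i, 1/(x − s i (ħ))` satisfies
`ħ · ∂ω_ħ(x)/∂ħ = ω_ħ(x) + ∑ i j, A i j (ħ) · V′(s j (ħ)) / (x − s i (ħ))²`. -/
theorem resolvent_hbar_variation (m : ℕ) (V : Polynomial ℂ)
    (I : Set ℝ) (hI : I.OrdConnected) (hInontriv : I.Nontrivial) (hI0 : (0 : ℝ) ∉ I)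
    (s s' : ℝ → Fin m → ℂ) (A : ℝ → Matrix (Fin m) (Fin m) ℂ)
    (hdiff : ∀ h ∈ I, ∀ i, HasDerivWithinAt (fun τ => s τ i) (s' h i) I h)
    (hdist : ∀ h ∈ I, ∀ i j, i ≠ j → s h i ≠ s h j)
    (hBethe : ∀ h ∈ I, ∀ i,
      V.derivative.eval (s h i)
        = 2 * (h : ℂ) * ∑ j ∈ univ.erase i, 1 / (s h i - s h j))
    (hA : ∀ h ∈ I,
      hessianT m (h : ℂ) (fun k => V.derivative.derivative.eval (s h k)) (s h)
          * A h = 1 ∧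
      A h * hessianT m (h : ℂ)
          (fun k => V.derivative.derivative.eval (s h k)) (s h) = 1) :
    ∀ h ∈ I, ∀ x : ℂ, (∀ i, x ≠ s h i) →
      ∃ d : ℂ,
        HasDerivWithinAt (fun τ : ℝ => (τ : ℂ) * ∑ i, 1 / (x - s τ i)) d I h ∧
        (h : ℂ) * d
          = (h : ℂ) * ∑ i, 1 / (x - s h i)
            + ∑ i, ∑ j, A h i j * V.derivative.eval (s h j) / (x - s h i) ^ 2 := by
  intro h hh x hx
  have hh0 : (h : ℂ) ≠ 0 := Complex.ofReal_ne_zero.mpr fun h0 => hI0 (h0 ▸ hh)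
  have hT : hessianT m h (fun k => V.derivative.derivative.eval (s h k)) (s h)
      *ᵥ (fun k => (h : ℂ) ^ 2 * s' h k) = fun k => V.derivative.eval (s h k) :=
    hessianT_mulVec_sq_mul_eq_of_bethe hh0 (hBethe h hh) fun i =>
      bethe_linearization V (hI.uniqueDiffOn hInontriv h hh) hh i (hdiff h hh)
        (fun j hji => hdist h hh i j hji.symm) fun τ hτ => hBethe τ hτ i
  have hvel : A h *ᵥ (fun k => V.derivative.eval (s h k)) = fun k => (h : ℂ) ^ 2 * s' h k := by
    rw [← hT, mulVec_mulVec, (hA h hh).2, one_mulVec]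
  have hrow : ∀ i, ∑ j, A h i j * V.derivative.eval (s h j) = (h : ℂ) ^ 2 * s' h i :=
    congr_fun hvel
  refine ⟨_, hasDerivWithinAt_ofReal_mul_sum_one_div_sub x (hdiff h hh) hx, ?_⟩
  simp only [← sum_div, hrow, mul_add, mul_sum]
  exact congrArg _ (sum_congr rfl fun i _ => by ring)
end
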